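/- Let G and G' be two vertex-disjoint graphs, each with at least two vertices, let v be a vertex of G and v' a vertex of G', and let G'' be the graph obtained from the disjoint union of G and G' by adding the edge vv'. For a set S'' of vertices of G'': S'' is a type I set for v' in G'' with L_{S''}(v') = −1 if and only if S'' = S ∪ S' where S = S'' ∩ V(G) is a type I set for v in G, S' = S'' ∩ V(G') is a type I set for v' in G', and (L_S(v), L_{S'}(v')) = (1, −1). -/

import Mathlib

/-- A set of vertices is independent: no two of its vertices are adjacent. -/
def IndepSet {V : Type*} (G : SimpleGraph V) (S : Set V) : Prop :=
  ∀ u ∈ S, ∀ w ∈ S, ¬ G.Adj u w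

/-- `S` is a type I set for `v` in `G`: `S` is independent, every vertex
`u ∉ S ∪ {v}` has at least one and at most two neighbors in `S`, and `v` either
belongs to `S` or has at most two neighbors in `S`. -/
def TypeISet {V : Type*} (G : SimpleGraph V) (v : V) (S : Set V) : Prop :=
  IndepSet G S ∧
    (∀ u, u ∉ S → u ≠ v →
      1 ≤ (S ∩ G.neighborSet u).ncard ∧ (S ∩ G.neighborSet u).ncard ≤ 2) ∧
    (v ∈ S ∨ (S ∩ G.neighborSet v).ncard ≤ 2)

/-- The labeling `L_S(v) = l` : `0` if `v ∈ S`; `k ≥ 1` if `v ∉ S` and `v` has exactly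
`k` neighbors in `S`; `-1` if `N[v] ∩ S = ∅` and every neighbor of `v` has exactly one
neighbor in `S`; `-2` if `N[v] ∩ S = ∅` and some neighbor of `v` has exactly two
neighbors in `S`. -/
def HasLabel {V : Type*} (G : SimpleGraph V) (v : V) (S : Set V) (l : ℤ) : Prop :=
  (v ∈ S ∧ l = 0) ∨
  (v ∉ S ∧ ∃ k : ℕ, 1 ≤ k ∧ (S ∩ G.neighborSet v).ncard = k ∧ l = (k : ℤ)) ∨
  (v ∉ S ∧ S ∩ G.neighborSet v = ∅ ∧
    (∀ u ∈ G.neighborSet v, (S ∩ G.neighborSet u).ncard = 1) ∧ l = -1) ∨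
  (v ∉ S ∧ S ∩ G.neighborSet v = ∅ ∧
    (∃ u ∈ G.neighborSet v, (S ∩ G.neighborSet u).ncard = 2) ∧ l = -2)

/-- The star `K_{1,r}` with center `none` and the `r` leaves `some i`. -/
def starGraph (r : ℕ) : SimpleGraph (Option (Fin r)) where
  Adj a b := (a = none ∧ b ≠ none) ∨ (a ≠ none ∧ b = none)
  symm := by constructor; intro a b h; tauto
  loopless := by constructor; intro a h; tauto

/-- The graph obtained from `G` by adding a new vertex `none` adjacent only to `v`. -/
def addLeaf {V : Type*} (G : SimpleGraph V) (v : V) : SimpleGraph (Option V) where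
  Adj a b := match a, b with
    | some x, some y => G.Adj x y
    | none, some y => y = v
    | some x, none => x = v
    | none, none => False
  symm := by
    constructor; intro a b h
    match a, b with
    | some x, some y => exact h.symm
    | none, some y => exact h
    | some x, none => exact h
    | none, none => exact h
  loopless := by
    constructor; intro a h
    match a with
    | some x => exact G.irrefl h
    | none => exact h

/-- The graph obtained from the disjoint union of `G` and `H` by adding the edge
between `v` (in `G`) and `v'` (in `H`). -/
def joinAt {V W : Type*} (G : SimpleGraph V) (H : SimpleGraph W) (v : V) (v' : W) :
    SimpleGraph (V ⊕ W) where
  Adj a b := match a, b with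
    | Sum.inl x, Sum.inl y => G.Adj x y
    | Sum.inr x, Sum.inr y => H.Adj x y
    | Sum.inl x, Sum.inr y => x = v ∧ y = v'
    | Sum.inr x, Sum.inl y => x = v' ∧ y = v
  symm := by
    constructor; intro a b h
    match a, b with
    | Sum.inl x, Sum.inl y => exact h.symm
    | Sum.inr x, Sum.inr y => exact h.symm
    | Sum.inl x, Sum.inr y => exact ⟨h.2, h.1⟩
    | Sum.inr x, Sum.inl y => exact ⟨h.2, h.1⟩
  loopless := by
    constructor; intro a h
    match a with
    | Sum.inl x => exact G.irrefl h
    | Sum.inr x => exact H.irrefl h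

/-!
Both endpoints of the bridge `vv'` lie outside `S''`: `v'` because its label is `-1`, and `v`
because label `-1` forbids neighbors of `v'` in `S''`. So the bridge contributes nothing to
any neighbor count, and every count in the join is a count in `G` or in `G'`. The only
condition that mixes the two sides is that the neighbor `v` of `v'` has exactly one neighbor
in `S''`, which is `L_S(v) = 1`.
-/

section Labels

variable {V : Type*} {G : SimpleGraph V} {v : V} {S : Set V}

theorem hasLabel_one_iff :
    HasLabel G v S 1 ↔ v ∉ S ∧ (S ∩ G.neighborSet v).ncard = 1 := by
  constructor
  · rintro (⟨-, h⟩ | ⟨hv, k, -, hk, h⟩ | ⟨-, -, -, h⟩ | ⟨-, -, -, h⟩)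
    · omega
    · exact ⟨hv, by omega⟩
    · omega
    · omega
  · rintro ⟨hv, h⟩
    exact Or.inr (Or.inl ⟨hv, 1, le_rfl, h, rfl⟩)

theorem hasLabel_neg_one_iff :
    HasLabel G v S (-1) ↔ v ∉ S ∧ S ∩ G.neighborSet v = ∅ ∧
      ∀ u ∈ G.neighborSet v, (S ∩ G.neighborSet u).ncard = 1 := by
  constructor
  · rintro (⟨-, h⟩ | ⟨-, k, -, -, h⟩ | ⟨hv, hN, h1, -⟩ | ⟨-, -, -, h⟩)
    · omega
    · omega
    · exact ⟨hv, hN, h1⟩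
    · omega
  · rintro ⟨hv, hN, h1⟩
    exact Or.inr (Or.inr (Or.inl ⟨hv, hN, h1, rfl⟩))

end Labels

section Join

variable {V W : Type*} {G : SimpleGraph V} {G' : SimpleGraph W} {v : V} {v' : W}
  {S : Set (V ⊕ W)}

@[simp]
theorem joinAt_adj_inl_inl {x y : V} :
    (joinAt G G' v v').Adj (Sum.inl x) (Sum.inl y) ↔ G.Adj x y := Iff.rfl

@[simp]
theorem joinAt_adj_inr_inr {x y : W} :
    (joinAt G G' v v').Adj (Sum.inr x) (Sum.inr y) ↔ G'.Adj x y := Iff.rfl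

@[simp]
theorem joinAt_adj_inl_inr {x : V} {y : W} :
    (joinAt G G' v v').Adj (Sum.inl x) (Sum.inr y) ↔ x = v ∧ y = v' := Iff.rfl

@[simp]
theorem joinAt_adj_inr_inl {x : W} {y : V} :
    (joinAt G G' v v').Adj (Sum.inr x) (Sum.inl y) ↔ x = v' ∧ y = v := Iff.rfl

theorem indepSet_joinAt_iff :
    IndepSet (joinAt G G' v v') S ↔ IndepSet G (Sum.inl ⁻¹' S) ∧
      IndepSet G' (Sum.inr ⁻¹' S) ∧ ¬(Sum.inl v ∈ S ∧ Sum.inr v' ∈ S) := by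
  constructor
  · intro h
    exact ⟨fun x hx y hy => h _ hx _ hy, fun x hx y hy => h _ hx _ hy,
      fun ⟨hv, hv'⟩ => h _ hv _ hv' ⟨rfl, rfl⟩⟩
  · rintro ⟨hl, hr, hvv'⟩ (x | x) hx (y | y) hy hxy
    · exact hl x hx y hy hxy
    · obtain ⟨rfl, rfl⟩ := hxy; exact hvv' ⟨hx, hy⟩
    · obtain ⟨rfl, rfl⟩ := hxy; exact hvv' ⟨hy, hx⟩
    · exact hr x hx y hy hxy

theorem joinAt_inter_neighborSet_inl (h : Sum.inr v' ∉ S) (x : V) :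
    S ∩ (joinAt G G' v v').neighborSet (Sum.inl x) =
      Sum.inl '' (Sum.inl ⁻¹' S ∩ G.neighborSet x) := by
  ext (y | y) <;> aesop

theorem joinAt_inter_neighborSet_inr (h : Sum.inl v ∉ S) (y : W) :
    S ∩ (joinAt G G' v v').neighborSet (Sum.inr y) =
      Sum.inr '' (Sum.inr ⁻¹' S ∩ G'.neighborSet y) := by
  ext (x | x) <;> aesop

theorem joinAt_ncard_inter_neighborSet_inl (h : Sum.inr v' ∉ S) (x : V) :
    (S ∩ (joinAt G G' v v').neighborSet (Sum.inl x)).ncard =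
      (Sum.inl ⁻¹' S ∩ G.neighborSet x).ncard := by
  rw [joinAt_inter_neighborSet_inl h, Set.ncard_image_of_injective _ Sum.inl_injective]

theorem joinAt_ncard_inter_neighborSet_inr (h : Sum.inl v ∉ S) (y : W) :
    (S ∩ (joinAt G G' v v').neighborSet (Sum.inr y)).ncard =
      (Sum.inr ⁻¹' S ∩ G'.neighborSet y).ncard := by
  rw [joinAt_inter_neighborSet_inr h, Set.ncard_image_of_injective _ Sum.inr_injective]

theorem joinAt_forall_mem_neighborSet_inr_endpoint {p : V ⊕ W → Prop} :
    (∀ u ∈ (joinAt G G' v v').neighborSet (Sum.inr v'), p u) ↔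
      p (Sum.inl v) ∧ ∀ u ∈ G'.neighborSet v', p (Sum.inr u) := by
  simp [Sum.forall]

theorem hasLabel_joinAt_neg_one_iff :
    HasLabel (joinAt G G' v v') (Sum.inr v') S (-1) ↔
      HasLabel G v (Sum.inl ⁻¹' S) 1 ∧ HasLabel G' v' (Sum.inr ⁻¹' S) (-1) := by
  simp only [hasLabel_neg_one_iff, hasLabel_one_iff, Set.mem_preimage]
  by_cases hv : Sum.inl v ∈ S
  · have : (S ∩ (joinAt G G' v v').neighborSet (Sum.inr v')).Nonempty := ⟨_, hv, rfl, rfl⟩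
    simp [hv, this.ne_empty]
  by_cases hv' : Sum.inr v' ∈ S
  · simp [hv']
  rw [joinAt_inter_neighborSet_inr hv, Set.image_eq_empty,
    joinAt_forall_mem_neighborSet_inr_endpoint, joinAt_ncard_inter_neighborSet_inl hv']
  simp only [joinAt_ncard_inter_neighborSet_inr hv]
  tauto

theorem typeISet_joinAt_iff (hv : HasLabel G v (Sum.inl ⁻¹' S) 1)
    (hv' : HasLabel G' v' (Sum.inr ⁻¹' S) (-1)) :
    TypeISet (joinAt G G' v v') (Sum.inr v') S ↔
      TypeISet G v (Sum.inl ⁻¹' S) ∧ TypeISet G' v' (Sum.inr ⁻¹' S) := by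
  obtain ⟨hvS, hcv⟩ := hasLabel_one_iff.1 hv
  obtain ⟨hv'S, hN, -⟩ := hasLabel_neg_one_iff.1 hv'
  rw [Set.mem_preimage] at hvS hv'S
  simp only [TypeISet, indepSet_joinAt_iff, Sum.forall, Set.mem_preimage, ne_eq,
    joinAt_ncard_inter_neighborSet_inl, joinAt_ncard_inter_neighborSet_inr, hvS, hv'S,
    not_false_eq_true, hcv, hN, Sum.inr.injEq, reduceCtorEq, Set.ncard_empty, false_or,
    and_false, and_true, zero_le, Nat.one_le_ofNat, true_implies]
  constructor
  · rintro ⟨⟨hIl, hIr⟩, hDl, hDr⟩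
    exact ⟨⟨hIl, fun u hu _ => hDl u hu⟩, hIr, hDr⟩
  · rintro ⟨⟨hIl, hDl⟩, hIr, hDr⟩
    refine ⟨⟨hIl, hIr⟩, fun u hu => ?_, hDr⟩
    rcases eq_or_ne u v with rfl | huv
    · omega
    · exact hDl u hu huv

end Join

theorem statement16_general {V W : Type*} (G : SimpleGraph V) (G' : SimpleGraph W) (v : V) (v' : W)
    (S'' : Set (V ⊕ W)) :
    (TypeISet (joinAt G G' v v') (Sum.inr v') S'' ∧
        HasLabel (joinAt G G' v v') (Sum.inr v') S'' (-1)) ↔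
      ∃ (S : Set V) (S' : Set W), S = Sum.inl ⁻¹' S'' ∧ S' = Sum.inr ⁻¹' S'' ∧
        S'' = Sum.inl '' S ∪ Sum.inr '' S' ∧ TypeISet G v S ∧ TypeISet G' v' S' ∧
        HasLabel G v S 1 ∧ HasLabel G' v' S' (-1) := by
  rw [and_comm, hasLabel_joinAt_neg_one_iff]
  constructor
  · rintro ⟨⟨hL, hL'⟩, hS⟩
    obtain ⟨hS, hS'⟩ := (typeISet_joinAt_iff hL hL').1 hS
    exact ⟨_, _, rfl, rfl, (Set.image_preimage_inl_union_image_preimage_inr S'').symm,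
      hS, hS', hL, hL'⟩
  · rintro ⟨S, S', rfl, rfl, -, hS, hS', hL, hL'⟩
    exact ⟨⟨hL, hL'⟩, (typeISet_joinAt_iff hL hL').2 ⟨hS, hS'⟩⟩

theorem statement16 {V W : Type*} [Fintype V] [Fintype W] [Nontrivial V]
    [Nontrivial W] (G : SimpleGraph V) (G' : SimpleGraph W) (v : V) (v' : W)
    (S'' : Set (V ⊕ W)) :
    (TypeISet (joinAt G G' v v') (Sum.inr v') S'' ∧
        HasLabel (joinAt G G' v v') (Sum.inr v') S'' (-1)) ↔
      ∃ (S : Set V) (S' : Set W), S = Sum.inl ⁻¹' S'' ∧ S' = Sum.inr ⁻¹' S'' ∧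
        S'' = Sum.inl '' S ∪ Sum.inr '' S' ∧ TypeISet G v S ∧ TypeISet G' v' S' ∧
        HasLabel G v S 1 ∧ HasLabel G' v' S' (-1) :=
  statement16_general G G' v v' S''
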